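/- Let X be a vector lattice with X~ separating points of X. Then the canonical image of X is a regular sublattice of X~~ if and only if every order bounded functional on X is order continuous (X~_n = X~). -/

import Mathlib

set_option linter.unusedSectionVars false
set_option maxHeartbeats 1000000

open Filter Set

section ODual

variable (E : Type*) [AddCommGroup E] [Preorder E] [Module ℝ E]

/-- The order (bounded) dual: linear functionals bounded on order intervals. -/
noncomputable def obDual : Submodule ℝ (E →ₗ[ℝ] ℝ) where
  carrier := {f | ∀ w : E, ∃ M : ℝ, ∀ x : E, -w ≤ x → x ≤ w → |f x| ≤ M}
  zero_mem' := fun w => ⟨0, fun x _ _ => by simp⟩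
  add_mem' := fun {f g} hf hg w => by
    obtain ⟨M, hM⟩ := hf w
    obtain ⟨N, hN⟩ := hg w
    refine ⟨M + N, fun x h1 h2 => ?_⟩
    calc |(f + g) x| = |f x + g x| := by simp
    _ ≤ |f x| + |g x| := abs_add_le _ _
    _ ≤ M + N := add_le_add (hM x h1 h2) (hN x h1 h2)
  smul_mem' := fun c f hf => by
    intro w
    obtain ⟨M, hM⟩ := hf w
    refine ⟨|c| * M, fun x h1 h2 => ?_⟩
    calc |(c • f) x| = |c| * |f x| := by simp [abs_mul]
    _ ≤ |c| * M := mul_le_mul_of_nonneg_left (hM x h1 h2) (abs_nonneg c)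

/-- The pointwise-on-positive-elements (pre)order on a space of functionals. -/
instance instSubPre (Y : Submodule ℝ (E →ₗ[ℝ] ℝ)) : Preorder Y where
  le f g := ∀ x : E, 0 ≤ x → (f : E →ₗ[ℝ] ℝ) x ≤ (g : E →ₗ[ℝ] ℝ) x
  le_refl f x _ := le_rfl
  le_trans f g h h1 h2 x hx := (h1 x hx).trans (h2 x hx)

variable {E}

theorem subPre_le_iff {Y : Submodule ℝ (E →ₗ[ℝ] ℝ)} {f g : Y} :
    f ≤ g ↔ ∀ x : E, 0 ≤ x → (f : E →ₗ[ℝ] ℝ) x ≤ (g : E →ₗ[ℝ] ℝ) x := Iff.rfl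

/-- The same preorder `instSubPre` on the order dual of a space of functionals
(instance search no longer finds it there by itself). -/
noncomputable instance instBidualPre (Y : Submodule ℝ (E →ₗ[ℝ] ℝ)) : Preorder (obDual ↥Y) :=
  instSubPre ↥Y (obDual ↥Y)

/-- Order convergence of a net to a limit (sandwich form: eventually
`l - d ≤ x_α ≤ l + d` for every `d` in a set directed downward to `0`). -/
def OConvTo {ι : Type*} [Preorder ι] (x : ι → E) (l : E) : Prop :=
  ∃ D : Set E, D.Nonempty ∧ DirectedOn (· ≥ ·) D ∧ IsGLB D 0 ∧
    ∀ d ∈ D, ∃ α₀ : ι, ∀ α, α₀ ≤ α → l - d ≤ x α ∧ x α ≤ l + d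

/-- Order continuity of a linear functional: `f(x_α) → 0` whenever `x_α ↓ 0`. -/
def OrdContE (f : E →ₗ[ℝ] ℝ) : Prop :=
  ∀ D : Set E, D.Nonempty → DirectedOn (· ≥ ·) D → IsGLB D 0 →
    ∀ ε : ℝ, 0 < ε → ∃ d ∈ D, ∀ e ∈ D, e ≤ d → |f e| < ε

end ODual

section VL

variable (X : Type*) [Lattice X] [AddCommGroup X]
  [CovariantClass X X (· + ·) (· ≤ ·)] [Module ℝ X] [PosSMulMono ℝ X]

variable {X} in
/-- Unbounded order convergence: `|x_α - l| ⊓ u →o 0` for every `u ≥ 0`. -/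
def uoConvTo {ι : Type*} [Preorder ι] (x : ι → X) (l : X) : Prop :=
  ∀ u : X, 0 ≤ u → OConvTo (fun α => |x α - l| ⊓ u) (0 : X)

/-- The canonical evaluation of `x ∈ X` on a space `Y` of functionals on `X`. -/
def hatFun (Y : Submodule ℝ (X →ₗ[ℝ] ℝ)) (x : X) : Y →ₗ[ℝ] ℝ where
  toFun f := (f : X →ₗ[ℝ] ℝ) x
  map_add' f g := by simp
  map_smul' c f := by simp

theorem hatFun_mem (Y : Submodule ℝ (X →ₗ[ℝ] ℝ)) (x : X) :
    hatFun X Y x ∈ obDual Y := by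
  intro w
  refine ⟨(w : X →ₗ[ℝ] ℝ) (x⁺) + (w : X →ₗ[ℝ] ℝ) (x⁻), fun f h1 h2 => ?_⟩
  have hp : (0 : X) ≤ x⁺ := posPart_nonneg x
  have hn : (0 : X) ≤ x⁻ := negPart_nonneg x
  have e1 := (subPre_le_iff.mp h1) _ hp
  have e2 := (subPre_le_iff.mp h2) _ hp
  have e3 := (subPre_le_iff.mp h1) _ hn
  have e4 := (subPre_le_iff.mp h2) _ hn
  have c1 : -((w : X →ₗ[ℝ] ℝ) (x⁺)) ≤ (f : X →ₗ[ℝ] ℝ) (x⁺) := by simpa using e1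
  have c3 : -((w : X →ₗ[ℝ] ℝ) (x⁻)) ≤ (f : X →ₗ[ℝ] ℝ) (x⁻) := by simpa using e3
  have key : (f : X →ₗ[ℝ] ℝ) x
      = (f : X →ₗ[ℝ] ℝ) (x⁺) - (f : X →ₗ[ℝ] ℝ) (x⁻) := by
    rw [← map_sub, posPart_sub_negPart]
  show |(f : X →ₗ[ℝ] ℝ) x| ≤ _
  rw [key]
  have a1 : |(f : X →ₗ[ℝ] ℝ) (x⁺)| ≤ (w : X →ₗ[ℝ] ℝ) (x⁺) := abs_le.mpr ⟨c1, e2⟩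
  have a2 : |(f : X →ₗ[ℝ] ℝ) (x⁻)| ≤ (w : X →ₗ[ℝ] ℝ) (x⁻) := abs_le.mpr ⟨c3, e4⟩
  have := abs_sub ((f : X →ₗ[ℝ] ℝ) (x⁺)) ((f : X →ₗ[ℝ] ℝ) (x⁻))
  linarith

/-- The canonical embedding of `X` into the order dual of `Y ⊆ X~`. -/
def hatEl (Y : Submodule ℝ (X →ₗ[ℝ] ℝ)) (x : X) : obDual Y :=
  ⟨hatFun X Y x, hatFun_mem X Y x⟩

/-- `X~` separates the points of `X`. -/
def SepPoints : Prop := ∀ x : X, x ≠ 0 → ∃ f : obDual X, (f : X →ₗ[ℝ] ℝ) x ≠ 0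

/-- The canonical image of `X` in `X~~` is a regular sublattice:
`x_α ↓ 0` in `X` implies `x̂_α ↓ 0` in `X~~`. -/
def HatRegular : Prop :=
  ∀ D : Set X, D.Nonempty → DirectedOn (· ≥ ·) D → IsGLB D 0 →
    IsGLB (hatEl X (obDual X) '' D) (0 : obDual ↥(obDual X))

variable {X} in
/-- The net `x̂_α` is eventually order bounded in `X~~`. -/
def HatEvOB {ι : Type*} [Preorder ι] (x : ι → X) : Prop :=
  ∃ (b t : obDual ↥(obDual X)) (α₀ : ι), ∀ α, α₀ ≤ α →
    b ≤ hatEl X (obDual X) (x α) ∧ hatEl X (obDual X) (x α) ≤ t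

variable {X} in
/-- Bidual bounded uo-convergence. -/
def bbuoConvTo {ι : Type*} [Preorder ι] (x : ι → X) (l : X) : Prop :=
  uoConvTo x l ∧ HatEvOB x

/-- `X` has the `b`-property: every subset of `X` whose canonical image is
order bounded in `X~~` is order bounded in `X`. -/
def HasBProp : Prop :=
  ∀ A : Set X,
    (∃ b t : obDual ↥(obDual X), ∀ a ∈ A,
        b ≤ hatEl X (obDual X) a ∧ hatEl X (obDual X) a ≤ t) →
    ∃ b t : X, ∀ a ∈ A, b ≤ a ∧ a ≤ t

/-- The Archimedean property for a lattice-ordered group. -/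
def IsArch : Prop := ∀ x y : X, 0 ≤ x → (∀ n : ℕ, n • x ≤ y) → x = 0

end VL

/-!
Direction `←`: if `g ≤ x̂_d` for all `d ∈ D` and `z ≥ 0` in `X~`, then `g z ≤ z d → 0`.

Direction `→`: by the Riesz–Kantorovich formula `f⁺ x = sup f '' [0, x]` every `f ∈ X~` satisfies
`|f| ≤ f⁺ + (-f)⁺`, so it suffices to treat positive `h`. If `h d ≥ ε` along `D ↓ 0`, apply
Hahn–Banach to the sublinear functional `N z = inf_{d ∈ D} z⁺ d` on `X~` to get a linear `g ≤ N`
with `g h = N h ≥ ε`. Since `N` is monotone, `g` is order bounded, and since `N z ≤ z d` for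
`z ≥ 0`, `g` is a lower bound of `D̂`. Regularity then forces `g ≤ 0`, contradicting `g h > 0`.
-/

open Pointwise

section Functional

variable {E : Type*} [AddCommGroup E] [Preorder E] [Module ℝ E] {D : Set E} {f g : E →ₗ[ℝ] ℝ}
  {x : E}

/-- The Riesz–Kantorovich value `f⁺ x` for `x ≥ 0`. -/
noncomputable def supIcc (f : E →ₗ[ℝ] ℝ) (x : E) : ℝ := sSup (f '' Icc 0 x)

/-- For a downward directed `D ↓ 0` this is `lim_{d ∈ D} f⁺ d`. -/
noncomputable def infSupIcc (D : Set E) (f : E →ₗ[ℝ] ℝ) : ℝ := sInf (supIcc f '' D)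

theorem supIcc_le (hx : 0 ≤ x) {M : ℝ} (hM : ∀ u ∈ Icc 0 x, f u ≤ M) : supIcc f x ≤ M :=
  csSup_le ((nonempty_Icc.mpr hx).image f) (forall_mem_image.mpr hM)

theorem supIcc_smul_left {c : ℝ} (hc : 0 ≤ c) : supIcc (c • f) x = c * supIcc f x := by
  have himage : (c • f) '' Icc 0 x = c • (f '' Icc 0 x) := by
    rw [← image_smul, image_image]
    rfl
  rw [supIcc, himage, Real.sSup_smul_of_nonneg hc, smul_eq_mul, supIcc]

theorem le_infSupIcc (hne : D.Nonempty) {B : ℝ} (hB : ∀ d ∈ D, B ≤ supIcc f d) :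
    B ≤ infSupIcc D f :=
  le_csInf (hne.image _) (forall_mem_image.mpr hB)

theorem infSupIcc_smul {c : ℝ} (hc : 0 ≤ c) : infSupIcc D (c • f) = c * infSupIcc D f := by
  have himage : supIcc (c • f) '' D = c • (supIcc f '' D) := by
    rw [← image_smul, image_image]
    exact image_congr fun _ _ => supIcc_smul_left hc
  rw [infSupIcc, himage, Real.sInf_smul_of_nonneg hc, smul_eq_mul, infSupIcc]

theorem OrdContE.of_abs_le (hg : OrdContE g) (hfg : ∀ x, 0 ≤ x → |f x| ≤ g x) : OrdContE f := by
  intro D hne hdir hglb ε hε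
  obtain ⟨d, hd, hdε⟩ := hg D hne hdir hglb ε hε
  exact ⟨d, hd, fun e he hed =>
    (hfg e (hglb.1 he)).trans_lt ((le_abs_self _).trans_lt (hdε e he hed))⟩

end Functional

section OrderedGroup

variable {E : Type*} [AddCommGroup E] [Preorder E] [AddLeftMono E] [Module ℝ E] {D : Set E}
  {f g : E →ₗ[ℝ] ℝ} {x y : E}

theorem mem_obDual_of_nonneg (hf : ∀ x, 0 ≤ x → 0 ≤ f x) : f ∈ obDual E := by
  intro w
  refine ⟨f w, fun x hwx hxw => abs_le.mpr ⟨?_, ?_⟩⟩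
  · have := hf (x + w) (neg_le_iff_add_nonneg.mp hwx)
    rw [map_add] at this
    linarith
  · have := hf (w - x) (sub_nonneg.mpr hxw)
    rw [map_sub] at this
    linarith

theorem bddAbove_image_Icc (hf : f ∈ obDual E) (hx : 0 ≤ x) : BddAbove (f '' Icc 0 x) := by
  obtain ⟨M, hM⟩ := hf x
  refine ⟨M, ?_⟩
  rintro _ ⟨u, hu, rfl⟩
  exact (abs_le.mp (hM u ((neg_nonpos.mpr hx).trans hu.1) hu.2)).2

theorem le_supIcc (hf : f ∈ obDual E) {u : E} (hu : u ∈ Icc 0 x) : f u ≤ supIcc f x :=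
  le_csSup (bddAbove_image_Icc hf (hu.1.trans hu.2)) (mem_image_of_mem f hu)

theorem supIcc_nonneg (hf : f ∈ obDual E) (hx : 0 ≤ x) : 0 ≤ supIcc f x := by
  simpa using le_supIcc hf (left_mem_Icc.mpr hx)

theorem supIcc_mono_right (hf : f ∈ obDual E) (hx : 0 ≤ x) (hxy : x ≤ y) :
    supIcc f x ≤ supIcc f y :=
  supIcc_le hx fun _ hu => le_supIcc hf ⟨hu.1, hu.2.trans hxy⟩

theorem supIcc_mono_left (hg : g ∈ obDual E) (hx : 0 ≤ x) (hfg : ∀ u, 0 ≤ u → f u ≤ g u) :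
    supIcc f x ≤ supIcc g x :=
  supIcc_le hx fun u hu => (hfg u hu.1).trans (le_supIcc hg hu)

theorem supIcc_add_left_le (hf : f ∈ obDual E) (hg : g ∈ obDual E) (hx : 0 ≤ x) :
    supIcc (f + g) x ≤ supIcc f x + supIcc g x :=
  supIcc_le hx fun _ hu => add_le_add (le_supIcc hf hu) (le_supIcc hg hu)

theorem supIcc_eq_apply (hf : ∀ u, 0 ≤ u → 0 ≤ f u) (hx : 0 ≤ x) : supIcc f x = f x := by
  refine le_antisymm (supIcc_le hx fun u hu => ?_)
    (le_supIcc (mem_obDual_of_nonneg hf) ⟨hx, le_rfl⟩)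
  have := hf (x - u) (sub_nonneg.mpr hu.2)
  rw [map_sub] at this
  linarith

theorem supIcc_smul_right [PosSMulMono ℝ E] (hf : f ∈ obDual E) {c : ℝ} (hc : 0 < c)
    (hx : 0 ≤ x) : supIcc f (c • x) = c * supIcc f x := by
  have smul_le : ∀ c : ℝ, 0 < c → ∀ x : E, 0 ≤ x → supIcc f (c • x) ≤ c * supIcc f x := by
    intro c hc x hx
    refine supIcc_le (smul_nonneg hc.le hx) fun u hu => ?_
    have hu' : c⁻¹ • u ∈ Icc 0 x := by
      refine ⟨smul_nonneg (inv_nonneg.mpr hc.le) hu.1, ?_⟩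
      simpa [smul_smul, inv_mul_cancel₀ hc.ne'] using
        smul_le_smul_of_nonneg_left hu.2 (inv_nonneg.mpr hc.le)
    calc f u = c * f (c⁻¹ • u) := by rw [map_smul, smul_eq_mul, mul_inv_cancel_left₀ hc.ne']
      _ ≤ c * supIcc f x := mul_le_mul_of_nonneg_left (le_supIcc hf hu') hc.le
  refine le_antisymm (smul_le c hc x hx) ?_
  have := smul_le c⁻¹ (inv_pos.mpr hc) (c • x) (smul_nonneg hc.le hx)
  rwa [smul_smul, inv_mul_cancel₀ hc.ne', one_smul, ← div_eq_inv_mul, le_div_iff₀ hc,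
    mul_comm] at this

theorem infSupIcc_le (hD : 0 ∈ lowerBounds D) (hf : f ∈ obDual E) {d : E} (hd : d ∈ D) :
    infSupIcc D f ≤ supIcc f d := by
  refine csInf_le ⟨0, ?_⟩ (mem_image_of_mem _ hd)
  rintro _ ⟨e, he, rfl⟩
  exact supIcc_nonneg hf (hD he)

theorem infSupIcc_le_apply (hD : 0 ∈ lowerBounds D) (hf : ∀ x, 0 ≤ x → 0 ≤ f x) {d : E}
    (hd : d ∈ D) : infSupIcc D f ≤ f d :=
  (infSupIcc_le hD (mem_obDual_of_nonneg hf) hd).trans_eq (supIcc_eq_apply hf (hD hd))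

theorem infSupIcc_mono (hne : D.Nonempty) (hD : 0 ∈ lowerBounds D) (hf : f ∈ obDual E)
    (hg : g ∈ obDual E) (hfg : ∀ x, 0 ≤ x → f x ≤ g x) : infSupIcc D f ≤ infSupIcc D g :=
  le_infSupIcc hne fun _ hd => (infSupIcc_le hD hf hd).trans (supIcc_mono_left hg (hD hd) hfg)

theorem infSupIcc_add_le (hne : D.Nonempty) (hdir : DirectedOn (· ≥ ·) D)
    (hD : 0 ∈ lowerBounds D) (hf : f ∈ obDual E) (hg : g ∈ obDual E) :
    infSupIcc D (f + g) ≤ infSupIcc D f + infSupIcc D g := by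
  have hsum : ∀ d₁ ∈ D, ∀ d₂ ∈ D, infSupIcc D (f + g) ≤ supIcc f d₁ + supIcc g d₂ := by
    intro d₁ hd₁ d₂ hd₂
    obtain ⟨d, hd, hdd₁, hdd₂⟩ := hdir d₁ hd₁ d₂ hd₂
    calc infSupIcc D (f + g) ≤ supIcc (f + g) d := infSupIcc_le hD (add_mem hf hg) hd
      _ ≤ supIcc f d + supIcc g d := supIcc_add_left_le hf hg (hD hd)
      _ ≤ supIcc f d₁ + supIcc g d₂ :=
        add_le_add (supIcc_mono_right hf (hD hd) hdd₁) (supIcc_mono_right hg (hD hd) hdd₂)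
  rw [← sub_le_iff_le_add]
  refine le_infSupIcc hne fun d₁ hd₁ => ?_
  rw [sub_le_iff_le_add, ← sub_le_iff_le_add']
  exact le_infSupIcc hne fun d₂ hd₂ => sub_le_iff_le_add'.mpr (hsum d₁ hd₁ d₂ hd₂)

end OrderedGroup

section LatticeGroup

variable {X : Type*} [Lattice X] [AddCommGroup X] [AddLeftMono X]

theorem posPart_sub_negPart_of_nonneg_additive {S : X → ℝ}
    (hadd : ∀ x y, 0 ≤ x → 0 ≤ y → S (x + y) = S x + S y) {x a b : X} (ha : 0 ≤ a)
    (hb : 0 ≤ b) (hx : x = a - b) : S x⁺ - S x⁻ = S a - S b := by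
  have h : x⁺ + b = a + x⁻ := by
    rw [← sub_eq_sub_iff_add_eq_add, posPart_sub_negPart, hx]
  have := hadd _ _ (posPart_nonneg x) hb
  rw [h, hadd _ _ ha (negPart_nonneg x)] at this
  linarith

theorem supIcc_add_right [Module ℝ X] {f : X →ₗ[ℝ] ℝ} (hf : f ∈ obDual X) {x y : X}
    (hx : 0 ≤ x) (hy : 0 ≤ y) : supIcc f (x + y) = supIcc f x + supIcc f y := by
  refine le_antisymm (supIcc_le (add_nonneg hx hy) fun u hu => ?_) ?_
  · have hux : u ⊓ x ∈ Icc 0 x := ⟨le_inf hu.1 hx, inf_le_right⟩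
    have huy : u - u ⊓ x ∈ Icc 0 y := by
      refine ⟨sub_nonneg.mpr inf_le_left, ?_⟩
      rw [sub_inf, sub_self]
      exact sup_le hy (sub_le_iff_le_add'.mpr hu.2)
    calc f u = f (u ⊓ x) + f (u - u ⊓ x) := by rw [← map_add, add_sub_cancel]
      _ ≤ supIcc f x + supIcc f y := add_le_add (le_supIcc hf hux) (le_supIcc hf huy)
  · have hsum : ∀ u ∈ Icc 0 x, ∀ v ∈ Icc 0 y, f u + f v ≤ supIcc f (x + y) := by
      intro u hu v hv
      rw [← map_add]
      exact le_supIcc hf ⟨add_nonneg hu.1 hv.1, add_le_add hu.2 hv.2⟩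
    rw [← le_sub_iff_add_le]
    refine supIcc_le hx fun u hu => ?_
    rw [le_sub_iff_add_le, ← le_sub_iff_add_le']
    exact supIcc_le hy fun v hv => le_sub_iff_add_le'.mpr (hsum u hu v hv)

variable [Module ℝ X] [PosSMulMono ℝ X]

noncomputable def linearOfNonnegAdditive (S : X → ℝ)
    (hadd : ∀ x y, 0 ≤ x → 0 ≤ y → S (x + y) = S x + S y)
    (hsmul : ∀ c : ℝ, 0 < c → ∀ x, 0 ≤ x → S (c • x) = c * S x) : X →ₗ[ℝ] ℝ where
  toFun x := S x⁺ - S x⁻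
  map_add' x y := by
    rw [posPart_sub_negPart_of_nonneg_additive hadd (add_nonneg (posPart_nonneg x)
      (posPart_nonneg y)) (add_nonneg (negPart_nonneg x) (negPart_nonneg y)),
      hadd _ _ (posPart_nonneg x) (posPart_nonneg y),
      hadd _ _ (negPart_nonneg x) (negPart_nonneg y)]
    · ring
    · rw [add_sub_add_comm, posPart_sub_negPart, posPart_sub_negPart]
  map_smul' c x := by
    rw [RingHom.id_apply, smul_eq_mul]
    rcases lt_trichotomy c 0 with hc | rfl | hc
    · have hc' : 0 < -c := neg_pos.mpr hc
      rw [posPart_sub_negPart_of_nonneg_additive hadd (smul_nonneg hc'.le (negPart_nonneg x))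
        (smul_nonneg hc'.le (posPart_nonneg x)), hsmul _ hc' _ (negPart_nonneg x),
        hsmul _ hc' _ (posPart_nonneg x)]
      · ring
      · rw [← smul_sub, neg_smul, ← smul_neg, neg_sub, posPart_sub_negPart]
    · simp
    · rw [posPart_sub_negPart_of_nonneg_additive hadd (smul_nonneg hc.le (posPart_nonneg x))
        (smul_nonneg hc.le (negPart_nonneg x)), hsmul _ hc _ (posPart_nonneg x),
        hsmul _ hc _ (negPart_nonneg x)]
      · ring
      · rw [← smul_sub, posPart_sub_negPart]

theorem linearOfNonnegAdditive_apply_of_nonneg {S : X → ℝ}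
    (hadd : ∀ x y, 0 ≤ x → 0 ≤ y → S (x + y) = S x + S y)
    (hsmul : ∀ c : ℝ, 0 < c → ∀ x, 0 ≤ x → S (c • x) = c * S x) {x : X} (hx : 0 ≤ x) :
    linearOfNonnegAdditive S hadd hsmul x = S x := by
  have hS0 : S 0 = 0 := by simpa using hadd 0 0 le_rfl le_rfl
  show S x⁺ - S x⁻ = S x
  rw [posPart_sub_negPart_of_nonneg_additive hadd hx le_rfl (sub_zero x).symm, hS0, sub_zero]

theorem obDual.exists_nonneg_le (f : obDual X) : ∃ P : obDual X, 0 ≤ P ∧ f ≤ P := by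
  set P := linearOfNonnegAdditive (supIcc (f : X →ₗ[ℝ] ℝ)) (fun _ _ => supIcc_add_right f.2)
    (fun _ hc _ => supIcc_smul_right f.2 hc)
  have hP : ∀ x, 0 ≤ x → P x = supIcc (f : X →ₗ[ℝ] ℝ) x :=
    fun _ => linearOfNonnegAdditive_apply_of_nonneg _ _
  have hP_nonneg : ∀ x, 0 ≤ x → 0 ≤ P x := fun x hx => (hP x hx).symm ▸ supIcc_nonneg f.2 hx
  refine ⟨⟨P, mem_obDual_of_nonneg hP_nonneg⟩, fun x hx => ?_, fun x hx => ?_⟩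
  · simpa using hP_nonneg x hx
  · exact (le_supIcc f.2 ⟨hx, le_rfl⟩).trans_eq (hP x hx).symm

theorem obDual.exists_nonneg_abs_le (f : obDual X) :
    ∃ h : obDual X, 0 ≤ h ∧ ∀ x, 0 ≤ x → |(f : X →ₗ[ℝ] ℝ) x| ≤ (h : X →ₗ[ℝ] ℝ) x := by
  obtain ⟨P, hP0, hfP⟩ := exists_nonneg_le f
  obtain ⟨Q, hQ0, hfQ⟩ := exists_nonneg_le (-f)
  refine ⟨P + Q, fun x hx => ?_, fun x hx => abs_le.mpr ⟨?_, ?_⟩⟩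
  all_goals
    have hPx := hP0 x hx
    have hQx := hQ0 x hx
    have hfPx := hfP x hx
    have hfQx := hfQ x hx
    simp only [ZeroMemClass.coe_zero, NegMemClass.coe_neg, Submodule.coe_add,
      LinearMap.zero_apply, LinearMap.neg_apply, LinearMap.add_apply] at hPx hQx hfPx hfQx ⊢
    linarith

end LatticeGroup

theorem exists_linear_le_eq_of_sublinear {V : Type*} [AddCommGroup V] [Module ℝ V] (N : V → ℝ)
    (N_hom : ∀ c : ℝ, 0 < c → ∀ x, N (c • x) = c * N x)
    (N_add : ∀ x y, N (x + y) ≤ N x + N y) (x : V) :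
    ∃ g : V →ₗ[ℝ] ℝ, g x = N x ∧ ∀ y, g y ≤ N y := by
  have N_zero : N 0 = 0 := by
    have := N_hom 2 two_pos 0
    rw [smul_zero] at this
    linarith
  have N_neg : -N x ≤ N (-x) := by
    have := N_add x (-x)
    rw [add_neg_cancel, N_zero] at this
    linarith
  set g₀ : V →ₗ.[ℝ] ℝ := LinearPMap.mkSpanSingleton' x (N x) fun c hc => by
    rcases eq_or_ne c 0 with rfl | hc0
    · exact zero_smul ℝ _
    · rw [(smul_eq_zero.mp hc).resolve_left hc0, N_zero, smul_zero]
  have hg₀ : ∀ y : g₀.domain, g₀ y ≤ N y := by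
    rintro ⟨_, hy⟩
    obtain ⟨c, rfl⟩ := Submodule.mem_span_singleton.mp hy
    rw [LinearPMap.mkSpanSingleton'_apply, RingHom.id_apply, smul_eq_mul]
    show c * N x ≤ N (c • x)
    rcases lt_trichotomy c 0 with hc | rfl | hc
    · rw [← neg_smul_neg, N_hom _ (neg_pos.mpr hc)]
      nlinarith
    · simp [N_zero]
    · rw [N_hom c hc]
  obtain ⟨g, hg_ext, hg_le⟩ := exists_extension_of_le_sublinear g₀ N N_hom N_add hg₀
  refine ⟨g, ?_, hg_le⟩
  exact (hg_ext ⟨x, Submodule.mem_span_singleton_self x⟩).trans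
    (LinearPMap.mkSpanSingleton'_apply_self _ _ _ _)

theorem mem_obDual_of_le_monotone {E : Type*} [AddCommGroup E] [Preorder E] [Module ℝ E]
    {Y : Submodule ℝ (E →ₗ[ℝ] ℝ)} {N : Y → ℝ} (hN : Monotone N) {g : Y →ₗ[ℝ] ℝ}
    (hg : ∀ z, g z ≤ N z) : g ∈ obDual Y := by
  intro w
  refine ⟨N w, fun z hwz hzw => abs_le.mpr ⟨?_, (hg z).trans (hN hzw)⟩⟩
  have hnegz : -z ≤ w := fun x hx => by
    have := hwz x hx
    simp only [NegMemClass.coe_neg, LinearMap.neg_apply] at this ⊢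
    linarith
  have := (hg (-z)).trans (hN hnegz)
  rw [g.map_neg z] at this
  linarith

section Regular

variable {X : Type*} [Lattice X] [AddCommGroup X] [AddLeftMono X] [Module ℝ X] [PosSMulMono ℝ X]

theorem HatRegular.exists_apply_lt (hreg : HatRegular X) {D : Set X} (hne : D.Nonempty)
    (hdir : DirectedOn (· ≥ ·) D) (hglb : IsGLB D 0) {h : obDual X} (hh : 0 ≤ h) {ε : ℝ}
    (hε : 0 < ε) : ∃ d ∈ D, (h : X →ₗ[ℝ] ℝ) d < ε := by
  by_contra! hcon
  have hD : 0 ∈ lowerBounds D := hglb.1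
  let N : obDual X → ℝ := fun z => infSupIcc D z
  obtain ⟨g, hgh, hgN⟩ := exists_linear_le_eq_of_sublinear N
    (fun c hc z => by
      show infSupIcc D ((c • z : obDual X) : X →ₗ[ℝ] ℝ) = _
      rw [Submodule.coe_smul]
      exact infSupIcc_smul hc.le)
    (fun z w => by
      show infSupIcc D ((z + w : obDual X) : X →ₗ[ℝ] ℝ) ≤ _
      rw [Submodule.coe_add]
      exact infSupIcc_add_le hne hdir hD z.2 w.2) h
  have hN_mono : Monotone N := fun z w hzw => infSupIcc_mono hne hD z.2 w.2 hzw
  let G : obDual (obDual X) := ⟨g, mem_obDual_of_le_monotone hN_mono hgN⟩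
  have hG : G ∈ lowerBounds (hatEl X (obDual X) '' D) := by
    rintro _ ⟨d, hd, rfl⟩ z hz
    exact (hgN z).trans (infSupIcc_le_apply hD (fun x hx => by simpa using hz x hx) hd)
  have hG_nonpos : g h ≤ 0 := by simpa using (hreg D hne hdir hglb).2 hG h hh
  have hε_le : ε ≤ N h :=
    le_infSupIcc hne fun d hd => (hcon d hd).trans (le_supIcc h.2 ⟨hD hd, le_rfl⟩)
  linarith

theorem HatRegular.ordContE_of_nonneg (hreg : HatRegular X) {h : obDual X} (hh : 0 ≤ h) :
    OrdContE (h : X →ₗ[ℝ] ℝ) := by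
  intro D hne hdir hglb ε hε
  obtain ⟨d, hd, hdε⟩ := hreg.exists_apply_lt hne hdir hglb hh hε
  refine ⟨d, hd, fun e he hed => ?_⟩
  have he_nonneg := hh e (hglb.1 he)
  have hde := hh (d - e) (sub_nonneg.mpr hed)
  simp only [ZeroMemClass.coe_zero, LinearMap.zero_apply, map_sub] at he_nonneg hde
  rw [abs_of_nonneg he_nonneg]
  linarith

theorem hatRegular_of_ordContE (hcont : ∀ f : obDual X, OrdContE (f : X →ₗ[ℝ] ℝ)) :
    HatRegular X := by
  intro D hne hdir hglb
  refine ⟨?_, fun G hG z hz => ?_⟩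
  · rintro _ ⟨d, hd, rfl⟩ z hz
    simpa [hatEl, hatFun] using hz d (hglb.1 hd)
  · simp only [ZeroMemClass.coe_zero, LinearMap.zero_apply]
    refine le_of_forall_pos_lt_add fun ε hε => ?_
    obtain ⟨d, hd, hdε⟩ := hcont z D hne hdir hglb ε hε
    have hGz : (G : obDual X →ₗ[ℝ] ℝ) z ≤ (z : X →ₗ[ℝ] ℝ) d := hG ⟨d, hd, rfl⟩ z hz
    linarith [le_abs_self ((z : X →ₗ[ℝ] ℝ) d), hdε d hd le_rfl]

end Regular

theorem statement7_general {X : Type u} [Lattice X] [AddCommGroup X]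
    [CovariantClass X X (· + ·) (· ≤ ·)] [Module ℝ X] [PosSMulMono ℝ X] :
    HatRegular X ↔ ∀ f : obDual X, OrdContE (f : X →ₗ[ℝ] ℝ) := by
  refine ⟨fun hreg f => ?_, hatRegular_of_ordContE⟩
  obtain ⟨h, hh, hfh⟩ := obDual.exists_nonneg_abs_le f
  exact (hreg.ordContE_of_nonneg hh).of_abs_le hfh

/-- The canonical image of `X` is a regular sublattice of `X~~` iff every order
bounded functional on `X` is order continuous. -/
theorem statement7 {X : Type u} [Lattice X] [AddCommGroup X]
    [CovariantClass X X (· + ·) (· ≤ ·)] [Module ℝ X] [PosSMulMono ℝ X]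
    (harch : IsArch X)
    (hsep : SepPoints X) :
    HatRegular X ↔ ∀ f : obDual X, OrdContE (f : X →ₗ[ℝ] ℝ) :=
  statement7_general
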